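/- Let A(z) = Σ_{i=0}^n A_i z^i be a polynomial pencil with A_i ∈ L(H,K), and let 𝓐(z) = 𝓐_0 + 𝓐_1 z be the augmented linear pencil on Hⁿ, Kⁿ with 𝓐_0 the block-lower-triangular Toeplitz matrix with blocks A_0,…,A_{n-1} and 𝓐_1 the block-upper-triangular Toeplitz matrix with blocks A_1,…,A_n. Given {R_j}_{j∈ℤ} ⊆ L(K,H), define 𝓡_j ∈ L(Kⁿ,Hⁿ) to be the block Toeplitz operator with (p,q) block R_{nj + p - q} (1 ≤ p, q ≤ n). Then {R_j} satisfies the polynomial fundamental equations Σ_{k=0}^n R_{j-n+k} A_{n-k} = δ_{j,0} I and Σ_{k=0}^n A_{n-k} R_{j-n+k} = δ_{j,0} I for all j ∈ ℤ if and only if {𝓡_j} satisfies the linear fundamental equations 𝓡_{j-1}𝓐_1 + 𝓡_j 𝓐_0 = δ_{j,0}𝓘 and 𝓐_1 𝓡_{j-1} + 𝓐_0 𝓡_j = δ_{j,0}𝓘 for all j ∈ ℤ. -/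

import Mathlib

/-!
The operator `𝓡_{j-1} 𝓐₁ + 𝓡_j 𝓐₀` is again block Toeplitz: its `(p,q)` block is the sum of
`R_{nj+p-q-i} A_i` over `2n` consecutive indices `i`, a window containing the support `[0, n]`
of `i ↦ A_i`, so it is the coefficient of index `nj + p - q` in the formal product of the series
`R` and the polynomial `A`. The same holds for `𝓐₁ 𝓡_{j-1} + 𝓐₀ 𝓡_j`. A block Toeplitz operator
determines its symbol on `(-n, n)`, and every integer is `nj + i` with `0 ≤ i < n`, so the linear
equations for all `j` say exactly that these coefficients are `δ_{m,0}` for all `m`.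
-/

/-- Block Toeplitz operator on finite direct sums: the `(p,q)` block is `f (p - q)`. -/
noncomputable def blockToeplitz {E F : Type*}
    [NormedAddCommGroup E] [NormedSpace ℂ E] [NormedAddCommGroup F] [NormedSpace ℂ F]
    (n : ℕ) (f : ℤ → (E →L[ℂ] F)) : (Fin n → E) →L[ℂ] (Fin n → F) :=
  ContinuousLinearMap.pi fun p : Fin n =>
    ∑ q : Fin n, (f ((p : ℤ) - (q : ℤ))).comp (ContinuousLinearMap.proj q)

open Finset

section IntegerWindows

variable {M : Type*} [AddCommMonoid M]

theorem Fin.sum_univ_int_add_eq_sum_Ico (h : ℤ → M) (a : ℤ) (n : ℕ) :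
    ∑ r : Fin n, h (a + r) = ∑ i ∈ Ico a (a + n), h i := by
  rw [Fin.sum_univ_eq_sum_range (fun r => h (a + r))]
  refine sum_nbij' (fun r => a + r) (fun i => (i - a).toNat) ?_ ?_ ?_ ?_ ?_ <;>
    intro x hx <;> simp only [mem_range, mem_Ico] at * <;> omega

theorem Fin.sum_add_sum_shift_eq_sum_of_support_subset {n : ℕ} {h : ℤ → M}
    (hh : Function.support h ⊆ Set.Icc 0 n) {a : ℤ} (ha₀ : a ≤ 0) (ha₁ : 1 - n ≤ a) :
    ∑ r : Fin n, h (a + r) + ∑ r : Fin n, h (a + n + r) = ∑ k : Fin (n + 1), h k := by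
  have hk := Fin.sum_univ_int_add_eq_sum_Ico h 0 (n + 1)
  simp only [zero_add] at hk
  rw [hk, Fin.sum_univ_int_add_eq_sum_Ico, Fin.sum_univ_int_add_eq_sum_Ico,
    ← sum_union (Ico_disjoint_Ico_consecutive _ _ _), Ico_union_Ico_eq_Ico (by omega) (by omega)]
  refine (sum_subset (fun i hi => ?_) fun i _ hi => ?_).symm
  · simp only [mem_Ico] at hi ⊢
    omega
  · by_contra hne
    have := hh hne
    simp only [mem_Ico, Set.mem_Icc] at hi this
    omega

theorem Fin.sum_univ_rev_sub (g : ℤ → ℕ → M) (j : ℤ) (n : ℕ) :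
    ∑ k : Fin (n + 1), g (j - n + k) (n - k) = ∑ k : Fin (n + 1), g (j - k) k := by
  refine Fintype.sum_equiv Fin.revPerm _ _ fun k => ?_
  have hk := k.isLt
  simp only [Fin.revPerm_apply, Fin.val_rev]
  congr 1 <;> omega

end IntegerWindows

namespace blockToeplitz

variable {E F G : Type*} [NormedAddCommGroup E] [NormedSpace ℂ E]
  [NormedAddCommGroup F] [NormedSpace ℂ F] [NormedAddCommGroup G] [NormedSpace ℂ G] {n : ℕ}

@[simp]
theorem apply (f : ℤ → (E →L[ℂ] F)) (x : Fin n → E) (p : Fin n) :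
    blockToeplitz n f x p = ∑ q : Fin n, f (p - q) (x q) := by
  simp [blockToeplitz]

theorem apply_single (f : ℤ → (E →L[ℂ] F)) (p q : Fin n) (v : E) :
    blockToeplitz n f (Pi.single q v) p = f (p - q) v := by
  rw [apply, sum_eq_single q (fun r _ hr => by simp [Pi.single_eq_of_ne hr]) (by simp)]
  simp

theorem eq_iff {f g : ℤ → (E →L[ℂ] F)} :
    blockToeplitz n f = blockToeplitz n g ↔ ∀ i : ℤ, -n < i → i < n → f i = g i := by
  constructor
  · intro hfg i hi₀ hi₁
    let p : Fin n := ⟨i.toNat, by omega⟩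
    let q : Fin n := ⟨(-i).toNat, by omega⟩
    have hpq : (p : ℤ) - q = i := by simp only [p, q]; omega
    ext v
    simpa only [apply_single, hpq] using congr_fun (congr($hfg (Pi.single q v))) p
  · intro hfg
    ext x p
    simp only [apply]
    exact sum_congr rfl fun q _ => by rw [hfg _ (by omega) (by omega)]

theorem zero : blockToeplitz n (0 : ℤ → (E →L[ℂ] F)) = 0 := by
  ext x p
  simp

theorem ite_eq_one : blockToeplitz n (fun i => if i = 0 then (1 : E →L[ℂ] E) else 0) = 1 := by
  ext x p
  rw [apply, sum_eq_single p (fun q _ hqp => by simp [sub_eq_zero, Fin.val_inj, hqp.symm])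
    (by simp)]
  simp

theorem ite_eq_blockToeplitz_ite (j : ℤ) :
    (if j = 0 then 1 else 0 : (Fin n → E) →L[ℂ] (Fin n → E)) =
      blockToeplitz n fun i => if n * j + i = 0 then 1 else 0 := by
  split_ifs with hj
  · simp [hj, ite_eq_one]
  · rw [← zero, eq_iff]
    intro i hi₀ hi₁
    rw [if_neg fun h => hj ?_, Pi.zero_apply]
    have hi : i = 0 := Int.eq_zero_of_abs_lt_dvd ⟨-j, by linarith⟩ (abs_lt.2 ⟨hi₀, hi₁⟩)
    rw [hi, add_zero, mul_eq_zero] at h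
    exact h.resolve_left (by omega)

theorem forall_eq_ite_iff (hn : 0 < n) (c : ℤ → (E →L[ℂ] E)) :
    (∀ j : ℤ, (blockToeplitz n fun i => c (n * j + i)) = if j = 0 then 1 else 0) ↔
      ∀ m : ℤ, c m = if m = 0 then 1 else 0 := by
  simp only [ite_eq_blockToeplitz_ite, eq_iff]
  constructor
  · intro hc m
    have hm : m = n * (m / n) + m % n := by rw [add_comm, Int.emod_add_mul_ediv]
    rw [hm]
    exact hc _ _ (by linarith [Int.emod_nonneg m (by omega : (n : ℤ) ≠ 0)])
      (Int.emod_lt_of_pos m (by omega))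
  · exact fun hc j i _ _ => hc _

theorem comp_apply (f : ℤ → (F →L[ℂ] G)) (g : ℤ → (E →L[ℂ] F)) (x : Fin n → E) (p : Fin n) :
    (blockToeplitz n f).comp (blockToeplitz n g) x p =
      ∑ q : Fin n, (∑ r : Fin n, (f (p - r)).comp (g (r - q))) (x q) := by
  simp only [ContinuousLinearMap.comp_apply, apply, map_sum, FunLike.coe_sum, Finset.sum_apply]
  exact sum_comm

theorem comp_add_comp_eq {f f' : ℤ → (F →L[ℂ] G)} {g g' : ℤ → (E →L[ℂ] F)}
    {c : ℤ → (E →L[ℂ] G)} (hc : ∀ p q : Fin n,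
      ∑ r : Fin n, (f (p - r)).comp (g (r - q)) + ∑ r : Fin n, (f' (p - r)).comp (g' (r - q)) =
        c (p - q)) :
    (blockToeplitz n f).comp (blockToeplitz n g) + (blockToeplitz n f').comp (blockToeplitz n g') =
      blockToeplitz n c := by
  ext x p
  rw [add_apply, Pi.add_apply, comp_apply, comp_apply, apply, ← sum_add_distrib]
  exact sum_congr rfl fun q _ => by rw [← add_apply, hc]

theorem comp_augmented_eq {a : ℤ → (E →L[ℂ] F)} (ha : Function.support a ⊆ Set.Icc 0 n)
    (R : ℤ → (F →L[ℂ] E)) (j : ℤ) :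
    (blockToeplitz n fun i => R (n * (j - 1) + i)).comp (blockToeplitz n fun i => a (n + i)) +
        (blockToeplitz n fun i => R (n * j + i)).comp (blockToeplitz n a) =
      blockToeplitz n fun i => ∑ k : Fin (n + 1), (R (n * j + i - k)).comp (a k) := by
  refine comp_add_comp_eq fun p q => ?_
  have hq := q.isLt
  rw [add_comm, ← Fin.sum_add_sum_shift_eq_sum_of_support_subset
    (h := fun i => (R (n * j + (p - q) - i)).comp (a i))
    (fun i hi => ha fun h => hi (by simp [h])) (a := -q) (by omega) (by omega)]
  congr 1 <;> refine sum_congr rfl fun r _ => by ring_nf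

theorem augmented_comp_eq {a : ℤ → (E →L[ℂ] F)} (ha : Function.support a ⊆ Set.Icc 0 n)
    (R : ℤ → (F →L[ℂ] E)) (j : ℤ) :
    (blockToeplitz n fun i => a (n + i)).comp (blockToeplitz n fun i => R (n * (j - 1) + i)) +
        (blockToeplitz n a).comp (blockToeplitz n fun i => R (n * j + i)) =
      blockToeplitz n fun i => ∑ k : Fin (n + 1), (a k).comp (R (n * j + i - k)) := by
  refine comp_add_comp_eq fun p q => ?_
  have hp := p.isLt
  rw [← Fin.sum_add_sum_shift_eq_sum_of_support_subset
    (h := fun i => (a i).comp (R (n * j + (p - q) - i)))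
    (fun i hi => ha fun h => hi (by simp [h])) (a := p + 1 - n) (by omega) (by omega)]
  have hrev (r : Fin n) : ((Fin.rev r : ℕ) : ℤ) = n - 1 - r := by rw [Fin.val_rev]; omega
  rw [add_comm]
  congr 1 <;> refine Fintype.sum_equiv Fin.revPerm _ _ fun r => ?_ <;>
    simp only [Fin.revPerm_apply, hrev] <;> ring_nf

end blockToeplitz

theorem polynomial_pencil_augmented_fundamental_equations_general
    {H K : Type*} [NormedAddCommGroup H] [NormedSpace ℂ H]
    [NormedAddCommGroup K] [NormedSpace ℂ K]
    (n : ℕ) (hn : 1 ≤ n) (A : ℕ → (H →L[ℂ] K)) (R : ℤ → (K →L[ℂ] H)) :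
    -- `Aext i = A_i` for `0 ≤ i ≤ n` and `0` otherwise
    let Aext : ℤ → (H →L[ℂ] K) := fun i => if 0 ≤ i ∧ i ≤ (n : ℤ) then A i.toNat else 0
    let 𝓐₀ : (Fin n → H) →L[ℂ] (Fin n → K) := blockToeplitz n Aext
    let 𝓐₁ : (Fin n → H) →L[ℂ] (Fin n → K) := blockToeplitz n fun i => Aext ((n : ℤ) + i)
    let 𝓡 : ℤ → ((Fin n → K) →L[ℂ] (Fin n → H)) :=
      fun j => blockToeplitz n fun i => R ((n : ℤ) * j + i)
    ((∀ j : ℤ, ∑ k : Fin (n + 1), (R (j - n + k)).comp (A (n - k)) =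
        if j = 0 then (1 : H →L[ℂ] H) else 0) ∧
     (∀ j : ℤ, ∑ k : Fin (n + 1), (A (n - k)).comp (R (j - n + k)) =
        if j = 0 then (1 : K →L[ℂ] K) else 0)) ↔
    ((∀ j : ℤ, (𝓡 (j - 1)).comp 𝓐₁ + (𝓡 j).comp 𝓐₀ =
        if j = 0 then (1 : (Fin n → H) →L[ℂ] (Fin n → H)) else 0) ∧
     (∀ j : ℤ, 𝓐₁.comp (𝓡 (j - 1)) + 𝓐₀.comp (𝓡 j) =
        if j = 0 then (1 : (Fin n → K) →L[ℂ] (Fin n → K)) else 0)) := by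
  intro Aext 𝓐₀ 𝓐₁ 𝓡
  have hsupp : Function.support Aext ⊆ Set.Icc 0 n := fun i hi => by_contra fun h => hi (if_neg h)
  have hA (k : Fin (n + 1)) : Aext k = A k := if_pos ⟨by omega, by omega⟩
  simp only [𝓡, 𝓐₀, 𝓐₁, blockToeplitz.comp_augmented_eq hsupp,
    blockToeplitz.augmented_comp_eq hsupp, Fin.sum_univ_rev_sub fun a b => (R a).comp (A b),
    Fin.sum_univ_rev_sub fun a b => (A b).comp (R a), hA]
  exact and_congr
    (blockToeplitz.forall_eq_ite_iff hn fun m => ∑ k : Fin (n + 1), (R (m - k)).comp (A k)).symm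
    (blockToeplitz.forall_eq_ite_iff hn fun m => ∑ k : Fin (n + 1), (A k).comp (R (m - k))).symm

/-- for a polynomial pencil `A(z) = Σ_{i=0}^n A_i z^i`, the coefficients
`{R_j}` satisfy the polynomial fundamental equations iff the block Toeplitz operators
`𝓡_j` (with `(p,q)` block `R_{nj+p-q}`) satisfy the linear fundamental equations for the
augmented linear pencil `𝓐₀ + 𝓐₁ z` (where `𝓐₀` has `(p,q)` block `A_{p-q}` for `p ≥ q`,
`𝓐₁` has `(p,q)` block `A_{n+p-q}` for `q ≥ p`, and `0` otherwise). -/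
theorem polynomial_pencil_augmented_fundamental_equations
    {H K : Type*} [NormedAddCommGroup H] [NormedSpace ℂ H] [CompleteSpace H]
    [NormedAddCommGroup K] [NormedSpace ℂ K] [CompleteSpace K]
    (n : ℕ) (hn : 1 ≤ n) (A : ℕ → (H →L[ℂ] K)) (R : ℤ → (K →L[ℂ] H)) :
    -- `Aext i = A_i` for `0 ≤ i ≤ n` and `0` otherwise
    let Aext : ℤ → (H →L[ℂ] K) := fun i => if 0 ≤ i ∧ i ≤ (n : ℤ) then A i.toNat else 0
    let 𝓐₀ : (Fin n → H) →L[ℂ] (Fin n → K) := blockToeplitz n Aext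
    let 𝓐₁ : (Fin n → H) →L[ℂ] (Fin n → K) := blockToeplitz n fun i => Aext ((n : ℤ) + i)
    let 𝓡 : ℤ → ((Fin n → K) →L[ℂ] (Fin n → H)) :=
      fun j => blockToeplitz n fun i => R ((n : ℤ) * j + i)
    ((∀ j : ℤ, ∑ k : Fin (n + 1), (R (j - n + k)).comp (A (n - k)) =
        if j = 0 then (1 : H →L[ℂ] H) else 0) ∧
     (∀ j : ℤ, ∑ k : Fin (n + 1), (A (n - k)).comp (R (j - n + k)) =
        if j = 0 then (1 : K →L[ℂ] K) else 0)) ↔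
    ((∀ j : ℤ, (𝓡 (j - 1)).comp 𝓐₁ + (𝓡 j).comp 𝓐₀ =
        if j = 0 then (1 : (Fin n → H) →L[ℂ] (Fin n → H)) else 0) ∧
     (∀ j : ℤ, 𝓐₁.comp (𝓡 (j - 1)) + 𝓐₀.comp (𝓡 j) =
        if j = 0 then (1 : (Fin n → K) →L[ℂ] (Fin n → K)) else 0)) :=
  polynomial_pencil_augmented_fundamental_equations_general n hn A R
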